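/- Let h > 0 and (5/24)·h² ≤ Δt ≤ (5/12)·h². Let u, w be grid functions satisfying, for all i,j, the Crank–Nicolson fourth-order compact scheme for the heat equation: (1/144)·S₁(w)_{i,j} − (Δt/(12h²))·S₂(w)_{i,j} = (1/144)·S₁(u)_{i,j} + (Δt/(12h²))·S₂(u)_{i,j}, where S₁(f)_{i,j} = f_{i−1,j−1} + 10f_{i,j−1} + f_{i+1,j−1} + 10f_{i−1,j} + 100f_{i,j} + 10f_{i+1,j} + f_{i−1,j+1} + 10f_{i,j+1} + f_{i+1,j+1} and S₂(f)_{i,j} = f_{i−1,j−1} + 4f_{i,j−1} + f_{i+1,j−1} + 4f_{i−1,j} − 20f_{i,j} + 4f_{i+1,j} + f_{i−1,j+1} + 4f_{i,j+1} + f_{i+1,j+1}. Then w satisfies the discrete maximum principle: min_{i,j} u_{i,j} ≤ w_{i,j} ≤ max_{i,j} u_{i,j} for all i,j. -/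
import Mathlib


noncomputable section

/-- Grid functions with periodic indexing. -/
abbrev Grid (Nx Ny : ℕ) : Type := ZMod Nx × ZMod Ny → ℝ

variable {Nx Ny : ℕ}

/-- The compact-weighting nine-point stencil
`S₁(f)_{i,j} = f_{i−1,j−1} + 10f_{i,j−1} + f_{i+1,j−1} + 10f_{i−1,j} + 100f_{i,j}
 + 10f_{i+1,j} + f_{i−1,j+1} + 10f_{i,j+1} + f_{i+1,j+1}`. -/
def S1 (f : Grid Nx Ny) : Grid Nx Ny := fun p =>
  f (p.1 - 1, p.2 - 1) + 10 * f (p.1, p.2 - 1) + f (p.1 + 1, p.2 - 1)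
    + 10 * f (p.1 - 1, p.2) + 100 * f p + 10 * f (p.1 + 1, p.2)
    + f (p.1 - 1, p.2 + 1) + 10 * f (p.1, p.2 + 1) + f (p.1 + 1, p.2 + 1)

/-- The discrete-Laplacian nine-point stencil
`S₂(f)_{i,j} = f_{i−1,j−1} + 4f_{i,j−1} + f_{i+1,j−1} + 4f_{i−1,j} − 20f_{i,j}
 + 4f_{i+1,j} + f_{i−1,j+1} + 4f_{i,j+1} + f_{i+1,j+1}`. -/
def S2 (f : Grid Nx Ny) : Grid Nx Ny := fun p =>
  f (p.1 - 1, p.2 - 1) + 4 * f (p.1, p.2 - 1) + f (p.1 + 1, p.2 - 1)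
    + 4 * f (p.1 - 1, p.2) - 20 * f p + 4 * f (p.1 + 1, p.2)
    + f (p.1 - 1, p.2 + 1) + 4 * f (p.1, p.2 + 1) + f (p.1 + 1, p.2 + 1)

/-- Maximum of a grid function over all grid points. -/
def gridSup [NeZero Nx] [NeZero Ny] (f : Grid Nx Ny) : ℝ :=
  Finset.univ.sup' ⟨((0 : ZMod Nx), (0 : ZMod Ny)), Finset.mem_univ _⟩ f

/-- Minimum of a grid function over all grid points. -/
def gridInf [NeZero Nx] [NeZero Ny] (f : Grid Nx Ny) : ℝ :=
  Finset.univ.inf' ⟨((0 : ZMod Nx), (0 : ZMod Ny)), Finset.mem_univ _⟩ f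

/-- Discrete maximum principle for the Crank–Nicolson fourth-order compact
finite difference scheme for the heat equation `u_t = u_{xx} + u_{yy}` on a
uniform periodic grid with `Δx = Δy = h`, provided `(5/24)h² ≤ Δt ≤ (5/12)h²`. -/
theorem crank_nicolson_max_principle {Nx Ny : ℕ} [NeZero Nx] [NeZero Ny]
    (hNx : 5 ≤ Nx) (hNy : 5 ≤ Ny)
    (h dt : ℝ) (hh : 0 < h) (hdt1 : 5 / 24 * h ^ 2 ≤ dt) (hdt2 : dt ≤ 5 / 12 * h ^ 2)
    (u w : Grid Nx Ny)
    (hscheme : ∀ p, (1 / 144) * S1 w p - (dt / (12 * h ^ 2)) * S2 w p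
      = (1 / 144) * S1 u p + (dt / (12 * h ^ 2)) * S2 u p) :
    ∀ p, gridInf u ≤ w p ∧ w p ≤ gridSup u := by
  have h12 : (0:ℝ) < 12 * h ^ 2 := by positivity
  set r := dt / (12 * h ^ 2) with hrdef
  have hr1 : 5 / 288 ≤ r := by rw [hrdef, le_div_iff₀ h12]; nlinarith
  have hr2 : r ≤ 5 / 144 := by rw [hrdef, div_le_iff₀ h12]; nlinarith
  obtain ⟨pM, -, hpM⟩ := Finset.exists_max_image (Finset.univ : Finset (ZMod Nx × ZMod Ny)) w
    ⟨((0 : ZMod Nx), (0 : ZMod Ny)), Finset.mem_univ _⟩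
  obtain ⟨pm, -, hpm⟩ := Finset.exists_min_image (Finset.univ : Finset (ZMod Nx × ZMod Ny)) w
    ⟨((0 : ZMod Nx), (0 : ZMod Ny)), Finset.mem_univ _⟩
  have hw : ∀ q, w q ≤ w pM := fun q => hpM q (Finset.mem_univ q)
  have hw' : ∀ q, w pm ≤ w q := fun q => hpm q (Finset.mem_univ q)
  have hMle : ∀ q, u q ≤ gridSup u := fun q => Finset.le_sup' u (Finset.mem_univ q)
  have hmle : ∀ q, gridInf u ≤ u q := fun q => Finset.inf'_le u (Finset.mem_univ q)
  have hc1 : (0:ℝ) ≤ r - 1 / 144 := by linarith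
  have hc2 : (0:ℝ) ≤ 4 * r - 10 / 144 := by linarith
  have hd1 : (0:ℝ) ≤ 1 / 144 + r := by linarith
  have hd2 : (0:ℝ) ≤ 10 / 144 + 4 * r := by linarith
  have hd3 : (0:ℝ) ≤ 100 / 144 - 20 * r := by linarith
  have hub : w pM ≤ gridSup u := by
    have hs := hscheme pM
    simp only [S1, S2] at hs
    linarith [hs,
      mul_nonneg hc1 (sub_nonneg.2 (hw (pM.1 - 1, pM.2 - 1))),
      mul_nonneg hc1 (sub_nonneg.2 (hw (pM.1 + 1, pM.2 - 1))),
      mul_nonneg hc1 (sub_nonneg.2 (hw (pM.1 - 1, pM.2 + 1))),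
      mul_nonneg hc1 (sub_nonneg.2 (hw (pM.1 + 1, pM.2 + 1))),
      mul_nonneg hc2 (sub_nonneg.2 (hw (pM.1, pM.2 - 1))),
      mul_nonneg hc2 (sub_nonneg.2 (hw (pM.1 - 1, pM.2))),
      mul_nonneg hc2 (sub_nonneg.2 (hw (pM.1 + 1, pM.2))),
      mul_nonneg hc2 (sub_nonneg.2 (hw (pM.1, pM.2 + 1))),
      mul_nonneg hd1 (sub_nonneg.2 (hMle (pM.1 - 1, pM.2 - 1))),
      mul_nonneg hd1 (sub_nonneg.2 (hMle (pM.1 + 1, pM.2 - 1))),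
      mul_nonneg hd1 (sub_nonneg.2 (hMle (pM.1 - 1, pM.2 + 1))),
      mul_nonneg hd1 (sub_nonneg.2 (hMle (pM.1 + 1, pM.2 + 1))),
      mul_nonneg hd2 (sub_nonneg.2 (hMle (pM.1, pM.2 - 1))),
      mul_nonneg hd2 (sub_nonneg.2 (hMle (pM.1 - 1, pM.2))),
      mul_nonneg hd2 (sub_nonneg.2 (hMle (pM.1 + 1, pM.2))),
      mul_nonneg hd2 (sub_nonneg.2 (hMle (pM.1, pM.2 + 1))),
      mul_nonneg hd3 (sub_nonneg.2 (hMle pM))]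
  have hlb : gridInf u ≤ w pm := by
    have hs := hscheme pm
    simp only [S1, S2] at hs
    linarith [hs,
      mul_nonneg hc1 (sub_nonneg.2 (hw' (pm.1 - 1, pm.2 - 1))),
      mul_nonneg hc1 (sub_nonneg.2 (hw' (pm.1 + 1, pm.2 - 1))),
      mul_nonneg hc1 (sub_nonneg.2 (hw' (pm.1 - 1, pm.2 + 1))),
      mul_nonneg hc1 (sub_nonneg.2 (hw' (pm.1 + 1, pm.2 + 1))),
      mul_nonneg hc2 (sub_nonneg.2 (hw' (pm.1, pm.2 - 1))),
      mul_nonneg hc2 (sub_nonneg.2 (hw' (pm.1 - 1, pm.2))),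
      mul_nonneg hc2 (sub_nonneg.2 (hw' (pm.1 + 1, pm.2))),
      mul_nonneg hc2 (sub_nonneg.2 (hw' (pm.1, pm.2 + 1))),
      mul_nonneg hd1 (sub_nonneg.2 (hmle (pm.1 - 1, pm.2 - 1))),
      mul_nonneg hd1 (sub_nonneg.2 (hmle (pm.1 + 1, pm.2 - 1))),
      mul_nonneg hd1 (sub_nonneg.2 (hmle (pm.1 - 1, pm.2 + 1))),
      mul_nonneg hd1 (sub_nonneg.2 (hmle (pm.1 + 1, pm.2 + 1))),
      mul_nonneg hd2 (sub_nonneg.2 (hmle (pm.1, pm.2 - 1))),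
      mul_nonneg hd2 (sub_nonneg.2 (hmle (pm.1 - 1, pm.2))),
      mul_nonneg hd2 (sub_nonneg.2 (hmle (pm.1 + 1, pm.2))),
      mul_nonneg hd2 (sub_nonneg.2 (hmle (pm.1, pm.2 + 1))),
      mul_nonneg hd3 (sub_nonneg.2 (hmle pm))]
  intro p
  exact ⟨le_trans hlb (hw' p), le_trans (hw p) hub⟩
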